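/- (Achievable worst-case redundancy for a fixed quantizer.) Let Λ be a family of probability measures on X, d > 0 and n ≥ 1. Let π ∈ Q_n(d), choose for each cell A ∈ π a prototype y_A ∈ A with ρ_n(x^n, y_A) ≤ d for all x^n ∈ A, and define the quantizer φ by φ(x^n) = y_A for x^n ∈ A. Then for every ε > 0 there exists a codeword-length function ℓ on B = {y_A : A ∈ π} satisfying the Kraft inequality such that sup_{μ ∈ Λ} [R((φ, ℓ), μ^n) − R_n(d, μ^n)] ≤ (1/n)·( R⁺(Λ^n, σ(π)) + sup_{μ ∈ Λ} [H_{σ(π)}(μ^n) − n·R_n(d, μ^n)] + 1 ) + ε (where the inequality holds trivially if the right-hand side is +∞). -/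

import Mathlib

open Filter Topology
open scoped ENNReal NNReal BigOperators

noncomputable section

/-- Block (single-letter) distortion `ρ_n` on `Fin n → α`. -/
def blockDist {α : Type*} (ρ : α → α → ℝ) (n : ℕ) (x y : Fin n → α) : ℝ :=
  (∑ i, ρ (x i) (y i)) / n

/-- `π` is a (countable) partition: nonempty cells, every point in exactly one cell. -/
def IsPartition {α : Type*} (π : Set (Set α)) : Prop :=
  (∀ s ∈ π, s.Nonempty) ∧ ∀ x : α, ∃! s, s ∈ π ∧ x ∈ s

/-- `Q_n(d)`: partitions whose every cell contains a prototype within distortion `d`. -/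
def QPart {α : Type*} (ρ : α → α → ℝ) (n : ℕ) (d : ℝ) (π : Set (Set (Fin n → α))) : Prop :=
  IsPartition π ∧ ∀ A ∈ π, ∃ y ∈ A, ∀ x ∈ A, blockDist ρ n x y ≤ d

/-- Measure of a set under a pmf. -/
def measOf {α : Type*} (p : α → ℝ≥0∞) (s : Set α) : ℝ≥0∞ := ∑' x : s, p x.1

/-- `entTerm t = t·log₂(1/t) ∈ [0,∞]`, with the convention `0·log 0 = 0`. -/
def entTerm (t : ℝ≥0∞) : ℝ≥0∞ := ENNReal.ofReal (-(t.toReal * Real.logb 2 t.toReal))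

/-- Entropy of `p` restricted to the σ-field generated by the partition `π` (base 2). -/
def Hpart {α : Type*} (π : Set (Set α)) (p : α → ℝ≥0∞) : ℝ≥0∞ :=
  ∑' A : π, entTerm (measOf p A.1)

/-- Shannon entropy of a pmf (base 2). -/
def Hent {α : Type*} (p : α → ℝ≥0∞) : ℝ≥0∞ := ∑' x, entTerm (p x)

/-- Nonnegative per-cell KL term `(a log(a/b) − a + b)/log 2`; summed over a partition and
probability vectors (`∑ a = ∑ b = 1`) this gives exactly `∑ a log₂(a/b) ∈ [0,∞]` with the
usual conventions (`0·log(0/q) = 0`, `p·log(p/0) = ∞` for `p > 0`). -/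
def klTerm (a b : ℝ≥0∞) : ℝ≥0∞ :=
  if a = 0 then ENNReal.ofReal (b.toReal / Real.log 2)
  else if b = 0 then ⊤
  else ENNReal.ofReal
    ((a.toReal * Real.log (a.toReal / b.toReal) - a.toReal + b.toReal) / Real.log 2)

/-- Divergence `D_{σ(π)}(p‖q) ∈ [0,∞]` restricted to the cells of `π` (base 2). -/
def Dpart {α : Type*} (π : Set (Set α)) (p q : α → ℝ≥0∞) : ℝ≥0∞ :=
  ∑' A : π, klTerm (measOf p A.1) (measOf q A.1)

/-- `p` is a probability mass function. -/
def IsPMF {α : Type*} (p : α → ℝ≥0∞) : Prop := ∑' a, p a = 1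

/-- `n`-fold i.i.d. product pmf `μ^n`. -/
def prodPMF {α : Type*} (p : α → ℝ≥0∞) (n : ℕ) : (Fin n → α) → ℝ≥0∞ :=
  fun x => ∏ i, p (x i)

/-- `Λ^n = {μ^n : μ ∈ Λ}`. -/
def prodFam {α : Type*} (Λ : Set (α → ℝ≥0∞)) (n : ℕ) : Set ((Fin n → α) → ℝ≥0∞) :=
  (fun μ => prodPMF μ n) '' Λ

/-- Operational rate `R_n(d, μ_n) = inf_{π ∈ Q_n(d)} H_{σ(π)}(μ_n)/n`. -/
def opRate {α : Type*} (ρ : α → α → ℝ) (n : ℕ) (d : ℝ) (μn : (Fin n → α) → ℝ≥0∞) : ℝ≥0∞ :=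
  ⨅ π ∈ {π | QPart ρ n d π}, Hpart π μn / (n : ℝ≥0∞)

/-- Kraft inequality for a codeword-length function on `B`. -/
def Kraft {β : Type*} (B : Set β) (ℓ : β → ℕ) : Prop :=
  (∑' y : B, (2⁻¹ : ℝ≥0∞) ^ ℓ y.1) ≤ 1

/-- D-semifaithful code `ξ_n = (φ, ℓ)` of length `n` operating at distortion `d`. -/
def IsCode {α : Type*} (ρ : α → α → ℝ) (n : ℕ) (d : ℝ)
    (φ : (Fin n → α) → Fin n → α) (ℓ : (Fin n → α) → ℕ) : Prop :=
  (∀ x, blockDist ρ n x (φ x) ≤ d) ∧ (∀ y ∈ Set.range φ, φ y = y) ∧ Kraft (Set.range φ) ℓ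

/-- Rate (bits per letter) of the code `(φ, ℓ)` under `μn`. -/
def codeRate {α : Type*} {n : ℕ} (φ : (Fin n → α) → Fin n → α) (ℓ : (Fin n → α) → ℕ)
    (μn : (Fin n → α) → ℝ≥0∞) : ℝ≥0∞ :=
  (∑' x, μn x * (ℓ (φ x) : ℝ≥0∞)) / (n : ℝ≥0∞)

/-- Partition of the block space induced by a quantizer. -/
def codePart {α : Type*} {n : ℕ} (φ : (Fin n → α) → Fin n → α) : Set (Set (Fin n → α)) :=
  {s | ∃ y ∈ Set.range φ, s = φ ⁻¹' {y}}

/-- Information radius `R⁺(Λn, σ(π)) = inf_v sup_{μn ∈ Λn} D_{σ(π)}(μn‖v)`. -/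
def Rplus {β : Type*} (Λn : Set (β → ℝ≥0∞)) (π : Set (Set β)) : ℝ≥0∞ :=
  ⨅ v : {v : β → ℝ≥0∞ // IsPMF v}, ⨆ μn ∈ Λn, Dpart π μn v.1

/-- A distortion function: nonnegative and positive off the diagonal. -/
def IsDistortion {α : Type*} (ρ : α → α → ℝ) : Prop :=
  (∀ x y, 0 ≤ ρ x y) ∧ ∀ x y, x ≠ y → 0 < ρ x y

/-- Unbounded distortion consistent w.r.t. the Euclidean norm on the alphabet ℕ. -/
def ConsistentUnbounded (ρ : ℕ → ℕ → ℝ) : Prop :=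
  ∀ K : ℝ, 0 < K → ∃ ε : ℝ, 0 < ε ∧ ∀ i j : ℕ, ε ≤ |(i : ℝ) - (j : ℝ)| → K ≤ ρ i j

/-- Envelope family `Λ_f`. -/
def envFam (f : ℕ → ℝ≥0) : Set (ℕ → ℝ≥0∞) :=
  {p | IsPMF p ∧ ∀ x, p x ≤ (f x : ℝ≥0∞)}

/-- Tail set `T_k = {k, k+1, ...}`. -/
def Tset (k : ℕ) : Set ℕ := {x | k ≤ x}

/-- Tail sum of the envelope `∑_{x ≥ k} f(x)`. -/
def tailF (f : ℕ → ℝ≥0) (k : ℕ) : ℝ≥0∞ := ∑' x : Tset k, (f x.1 : ℝ≥0∞)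

/-- `τ_f = min{k ≥ 1 : ∑_{x ≥ k} f(x) ≤ 1}`. -/
def tauF (f : ℕ → ℝ≥0) : ℕ := sInf {k | 1 ≤ k ∧ tailF f k ≤ 1}

/-- The envelope distribution `μ̃_f`. -/
def mutilde (f : ℕ → ℝ≥0) : ℕ → ℝ≥0∞ := fun x =>
  if tauF f ≤ x then (f x : ℝ≥0∞)
  else if x = tauF f - 1 then 1 - tailF f (tauF f)
  else 0

/-- `u_f(n) = min{k ≥ 1 : μ̃_f(T_{k+1}) < 1/n}`. -/
def ufn (f : ℕ → ℝ≥0) (n : ℕ) : ℕ :=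
  sInf {k | 1 ≤ k ∧ measOf (mutilde f) (Tset (k + 1)) < (n : ℝ≥0∞)⁻¹}

/-- Tail-partition entropy `H_{σ(π̃_k)}(p)` for the partition `π̃_k = {Γ_k, {k+1}, {k+2}, ...}`. -/
def Htail (k : ℕ) (p : ℕ → ℝ≥0∞) : ℝ≥0∞ :=
  entTerm (measOf p (Set.Iic k)) + ∑' x : Tset (k + 1), entTerm (p x.1)

/-!
Code the cells of `π` with a Shannon code. Take `v` within `s` of the information radius
`R⁺(Λ^n, σ(π))` and mix in a little of an everywhere positive subprobability, so that every cell
gets mass `q_A ≥ 2^{-s} v(A) > 0`; the prototype of `A` gets length `⌈log₂ (1/q_A)⌉`. Then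
`∑ 2^{-ℓ} ≤ ∑ q_A ≤ 1`, and under `μ^n` the expected length is at most
`∑ μ^n(A) log₂ (1/v(A)) + 1 + s = H_{σ(π)}(μ^n) + D_{σ(π)}(μ^n‖v) + 1 + s`, where `D ≤ R⁺ + s`
and `H ≤ n R_n(d, μ^n) + sup_μ [H_{σ(π)}(μ^n) − n R_n(d, μ^n)]`.
-/

namespace IsPartition

variable {α : Type*} {π : Set (Set α)}

def cell (h : IsPartition π) (x : α) : π :=
  ⟨(h.2 x).exists.choose, (h.2 x).exists.choose_spec.1⟩

lemma mem_cell (h : IsPartition π) (x : α) : x ∈ (h.cell x : Set α) :=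
  (h.2 x).exists.choose_spec.2

lemma cell_eq_of_mem (h : IsPartition π) {x : α} {A : π} (hx : x ∈ (A : Set α)) :
    h.cell x = A :=
  Subtype.ext <| (h.2 x).unique ⟨(h.cell x).2, h.mem_cell x⟩ ⟨A.2, hx⟩

def sigmaEquiv (h : IsPartition π) : (Σ A : π, (A : Set α)) ≃ α where
  toFun z := z.2
  invFun x := ⟨h.cell x, x, h.mem_cell x⟩
  left_inv := by
    rintro ⟨A, x, hx⟩
    obtain rfl := h.cell_eq_of_mem hx
    rfl
  right_inv _ := rfl

lemma tsum_eq_tsum_cells (h : IsPartition π) (f : α → ℝ≥0∞) :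
    ∑' x, f x = ∑' A : π, ∑' x : (A : Set α), f x := by
  rw [← h.sigmaEquiv.tsum_eq f, ENNReal.tsum_sigma']
  rfl

lemma tsum_measOf (h : IsPartition π) (p : α → ℝ≥0∞) :
    ∑' A : π, measOf p A = ∑' x, p x :=
  (h.tsum_eq_tsum_cells p).symm

lemma measOf_ne_zero (h : IsPartition π) {p : α → ℝ≥0∞} (hp : ∀ x, p x ≠ 0) (A : π) :
    measOf p A ≠ 0 := by
  obtain ⟨x, hx⟩ := h.1 A A.2
  exact ne_bot_of_le_ne_bot (hp x) (ENNReal.le_tsum (⟨x, hx⟩ : (A : Set α)))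

variable {φ : α → α}

lemma cell_apply_eq_cell (h : IsPartition π) (hφ : ∀ A ∈ π, ∃ y ∈ A, ∀ x ∈ A, φ x = y) (x : α) :
    h.cell (φ x) = h.cell x := by
  obtain ⟨y, hy, hφy⟩ := hφ _ (h.cell x).2
  exact h.cell_eq_of_mem (hφy x (h.mem_cell x) ▸ hy)

lemma apply_eq_of_cell_eq (h : IsPartition π) (hφ : ∀ A ∈ π, ∃ y ∈ A, ∀ x ∈ A, φ x = y)
    {x x' : α} (hxx' : h.cell x = h.cell x') : φ x = φ x' := by
  obtain ⟨y, -, hφy⟩ := hφ _ (h.cell x).2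
  rw [hφy x (h.mem_cell x), hφy x' (hxx' ▸ h.mem_cell x')]

lemma tsum_range_le_tsum_cells (h : IsPartition π)
    (hφ : ∀ A ∈ π, ∃ y ∈ A, ∀ x ∈ A, φ x = y) (g : π → ℝ≥0∞) :
    ∑' y : Set.range φ, g (h.cell y) ≤ ∑' A, g A := by
  refine ENNReal.tsum_comp_le_tsum_of_injective ?_ g
  rintro ⟨_, x, rfl⟩ ⟨_, x', rfl⟩ hxx'
  simp only [h.cell_apply_eq_cell hφ] at hxx'
  exact Subtype.ext (h.apply_eq_of_cell_eq hφ hxx')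

end IsPartition

def invLogTwo : ℝ≥0∞ := ENNReal.ofReal (Real.log 2)⁻¹

lemma invLogTwo_ne_top : invLogTwo ≠ ⊤ := ENNReal.ofReal_ne_top

lemma mul_invLogTwo {a : ℝ≥0∞} (ha : a ≠ ⊤) :
    a * invLogTwo = ENNReal.ofReal (a.toReal * (Real.log 2)⁻¹) := by
  rw [ENNReal.ofReal_mul ENNReal.toReal_nonneg, ENNReal.ofReal_toReal ha, invLogTwo]

def shannonLength (q : ℝ≥0∞) : ℕ := ⌈Real.logb 2 q.toReal⁻¹⌉₊

lemma inv_two_pow_shannonLength_le {q : ℝ≥0∞} (hq0 : q ≠ 0) (hq : q ≠ ⊤) :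
    2⁻¹ ^ shannonLength q ≤ q := by
  have hy : 0 < q.toReal := ENNReal.toReal_pos hq0 hq
  have hpow : q.toReal⁻¹ ≤ (2 : ℝ) ^ shannonLength q := by
    have := Real.rpow_le_rpow_of_exponent_le one_le_two (Nat.le_ceil (Real.logb 2 q.toReal⁻¹))
    rwa [Real.rpow_logb two_pos (by norm_num) (by positivity), Real.rpow_natCast] at this
  calc (2⁻¹ : ℝ≥0∞) ^ shannonLength q = ENNReal.ofReal ((2 ^ shannonLength q)⁻¹) := by
        rw [ENNReal.ofReal_inv_of_pos (by positivity), ENNReal.ofReal_pow zero_le_two,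
          ENNReal.ofReal_ofNat, ENNReal.inv_pow]
    _ ≤ ENNReal.ofReal q.toReal :=
        ENNReal.ofReal_le_ofReal ((inv_le_comm₀ (by positivity) hy).2 hpow)
    _ = q := ENNReal.ofReal_toReal hq

lemma shannonLength_le_one_add {q : ℝ≥0∞} (hq0 : q ≠ 0) (hq : q ≤ 1) :
    (shannonLength q : ℝ≥0∞) ≤ 1 + ENNReal.ofReal (Real.logb 2 q.toReal⁻¹) := by
  have hy : 0 < q.toReal := ENNReal.toReal_pos hq0 (ne_top_of_le_ne_top ENNReal.one_ne_top hq)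
  have hy1 : q.toReal ≤ 1 := by simpa using ENNReal.toReal_mono ENNReal.one_ne_top hq
  have hlog : 0 ≤ Real.logb 2 q.toReal⁻¹ := Real.logb_nonneg one_lt_two ((one_le_inv₀ hy).2 hy1)
  rw [← ENNReal.ofReal_natCast, ← ENNReal.ofReal_one, ← ENNReal.ofReal_add zero_le_one hlog]
  exact ENNReal.ofReal_le_ofReal (by rw [add_comm]; exact (Nat.ceil_lt_add_one hlog).le)

def crossEntTerm (a b : ℝ≥0∞) : ℝ≥0∞ := ENNReal.ofReal (a.toReal * Real.logb 2 b.toReal⁻¹)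

lemma crossEntTerm_add_mul_invLogTwo {a b : ℝ≥0∞} (ha : a ≤ 1) (hb0 : b ≠ 0) (hb : b ≤ 1) :
    crossEntTerm a b + b * invLogTwo = klTerm a b + entTerm a + a * invLogTwo := by
  have haT : a ≠ ⊤ := ne_top_of_le_ne_top ENNReal.one_ne_top ha
  have hbT : b ≠ ⊤ := ne_top_of_le_ne_top ENNReal.one_ne_top hb
  have hy : 0 < b.toReal := ENNReal.toReal_pos hb0 hbT
  have hy1 : b.toReal ≤ 1 := by simpa using ENNReal.toReal_mono ENNReal.one_ne_top hb
  have hlog2 : 0 < Real.log 2 := Real.log_pos one_lt_two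
  rw [mul_invLogTwo haT, mul_invLogTwo hbT, crossEntTerm]
  rcases eq_or_ne a 0 with rfl | ha0
  · simp [klTerm, entTerm, div_eq_mul_inv]
  have hx : 0 < a.toReal := ENNReal.toReal_pos ha0 haT
  have hx1 : a.toReal ≤ 1 := by simpa using ENNReal.toReal_mono ENNReal.one_ne_top ha
  set x := a.toReal
  set y := b.toReal
  have hkl : 0 ≤ (x * Real.log (x / y) - x + y) / Real.log 2 := by
    have h := mul_le_mul_of_nonneg_left
      (Real.log_le_sub_one_of_pos (show 0 < y / x by positivity)) hx.le
    rw [mul_sub, mul_div_cancel₀ _ hx.ne', mul_one, ← inv_div, Real.log_inv] at h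
    exact div_nonneg (by linarith) hlog2.le
  have hent : 0 ≤ -(x * Real.logb 2 x) := by
    nlinarith [Real.logb_nonpos one_lt_two hx.le hx1]
  rw [klTerm, if_neg ha0, if_neg hb0, entTerm,
    ← ENNReal.ofReal_add (mul_nonneg hx.le (Real.logb_nonneg one_lt_two ((one_le_inv₀ hy).2 hy1)))
      (by positivity),
    ← ENNReal.ofReal_add hkl hent, ← ENNReal.ofReal_add (add_nonneg hkl hent) (by positivity)]
  congr 1
  rw [Real.logb, Real.logb, Real.log_inv, Real.log_div hx.ne' hy.ne']
  field_simp
  ring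

lemma Real.logb_inv_le_add_logb_inv {q v s : ℝ} (hv : 0 < v) (hvq : 2 ^ (-s) * v ≤ q) :
    Real.logb 2 q⁻¹ ≤ s + Real.logb 2 v⁻¹ := by
  have h := Real.logb_le_logb_of_le one_lt_two (by positivity) hvq
  rw [Real.logb_mul (by positivity) hv.ne', Real.logb_rpow two_pos (by norm_num)] at h
  rw [Real.logb_inv, Real.logb_inv]
  linarith

lemma mul_shannonLength_add_le {p v q : ℝ≥0∞} {s : ℝ} (hp : p ≤ 1) (hv : v ≤ 1) (hq0 : q ≠ 0)
    (hq : q ≤ 1) (hvq : ENNReal.ofReal (2 ^ (-s)) * v ≤ q) :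
    p * shannonLength q + v * invLogTwo
      ≤ klTerm p v + entTerm p + p * invLogTwo + p * (1 + ENNReal.ofReal s) := by
  rcases eq_or_ne p 0 with rfl | hp0
  · simp [klTerm, mul_invLogTwo (ne_top_of_le_ne_top ENNReal.one_ne_top hv), div_eq_mul_inv]
  rcases eq_or_ne v 0 with rfl | hv0
  · simp [klTerm, hp0]
  have hvT : v ≠ ⊤ := ne_top_of_le_ne_top ENNReal.one_ne_top hv
  have hlog : Real.logb 2 q.toReal⁻¹ ≤ s + Real.logb 2 v.toReal⁻¹ := by
    refine Real.logb_inv_le_add_logb_inv (ENNReal.toReal_pos hv0 hvT) ?_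
    have := ENNReal.toReal_mono (ne_top_of_le_ne_top ENNReal.one_ne_top hq) hvq
    rwa [ENNReal.toReal_mul, ENNReal.toReal_ofReal (by positivity)] at this
  have hcross : p * ENNReal.ofReal (Real.logb 2 v.toReal⁻¹) = crossEntTerm p v := by
    rw [crossEntTerm, ENNReal.ofReal_mul ENNReal.toReal_nonneg,
      ENNReal.ofReal_toReal (ne_top_of_le_ne_top ENNReal.one_ne_top hp)]
  calc p * shannonLength q + v * invLogTwo
      ≤ p * (1 + ENNReal.ofReal s + ENNReal.ofReal (Real.logb 2 v.toReal⁻¹)) + v * invLogTwo := by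
        gcongr
        refine (shannonLength_le_one_add hq0 hq).trans ?_
        rw [add_assoc]
        gcongr
        exact (ENNReal.ofReal_le_ofReal hlog).trans ENNReal.ofReal_add_le
    _ = p * (1 + ENNReal.ofReal s) + (crossEntTerm p v + v * invLogTwo) := by
        rw [← hcross]; ring
    _ = _ := by
        rw [crossEntTerm_add_mul_invLogTwo hp hv0 hv]; ring

theorem tsum_mul_shannonLength_le {ι : Type*} {p v q : ι → ℝ≥0∞} {s : ℝ}
    (hp : ∑' i, p i = 1) (hv : ∑' i, v i = 1) (hq0 : ∀ i, q i ≠ 0) (hq : ∀ i, q i ≤ 1)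
    (hvq : ∀ i, ENNReal.ofReal (2 ^ (-s)) * v i ≤ q i) :
    ∑' i, p i * shannonLength (q i)
      ≤ ∑' i, klTerm (p i) (v i) + ∑' i, entTerm (p i) + 1 + ENNReal.ofReal s := by
  refine (ENNReal.add_le_add_iff_right invLogTwo_ne_top).1 ?_
  calc ∑' i, p i * shannonLength (q i) + invLogTwo
      = ∑' i, (p i * shannonLength (q i) + v i * invLogTwo) := by
        rw [ENNReal.tsum_add, ENNReal.tsum_mul_right, hv, one_mul]
    _ ≤ ∑' i, (klTerm (p i) (v i) + entTerm (p i) + p i * invLogTwo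
          + p i * (1 + ENNReal.ofReal s)) :=
        ENNReal.tsum_le_tsum fun i => mul_shannonLength_add_le (hp ▸ ENNReal.le_tsum i)
          (hv ▸ ENNReal.le_tsum i) (hq0 i) (hq i) (hvq i)
    _ = _ := by
        simp only [ENNReal.tsum_add, ENNReal.tsum_mul_right, hp, one_mul]
        ring

lemma exists_pos_ge_mul_tsum_le_one {α : Type*} [Countable α] {v : α → ℝ≥0∞}
    (hv : ∑' x, v x ≤ 1) {s : ℝ} (hs : 0 < s) :
    ∃ q : α → ℝ≥0∞, ∑' x, q x ≤ 1 ∧ (∀ x, q x ≠ 0) ∧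
      ∀ x, ENNReal.ofReal (2 ^ (-s)) * v x ≤ q x := by
  set c := ENNReal.ofReal (2 ^ (-s))
  have hc : c < 1 := by
    rw [← ENNReal.ofReal_one]
    exact (ENNReal.ofReal_lt_ofReal_iff one_pos).2
      (Real.rpow_lt_one_of_one_lt_of_neg one_lt_two (by linarith))
  obtain ⟨w, hw0, hw⟩ := ENNReal.exists_pos_sum_of_countable' (tsub_pos_of_lt hc).ne' α
  refine ⟨fun x => c * v x + w x, ?_, fun x => ne_bot_of_le_ne_bot (hw0 x).ne' le_add_self,
    fun x => le_self_add⟩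
  calc ∑' x, (c * v x + w x) = c * ∑' x, v x + ∑' x, w x := by
        rw [ENNReal.tsum_add, ENNReal.tsum_mul_left]
    _ ≤ c * 1 + (1 - c) := by gcongr
    _ = 1 := by rw [mul_one, add_tsub_cancel_of_le hc.le]

theorem tsum_prodPMF {α : Type*} (p : α → ℝ≥0∞) (n : ℕ) :
    ∑' x, prodPMF p n x = (∑' a, p a) ^ n := by
  induction n with
  | zero => simp [prodPMF]
  | succ n ih =>
    rw [← (Fin.consEquiv fun _ : Fin (n + 1) => α).tsum_eq, ENNReal.tsum_prod', pow_succ', ← ih,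
      ← ENNReal.tsum_mul_right]
    refine tsum_congr fun a => ?_
    rw [← ENNReal.tsum_mul_left]
    refine tsum_congr fun x => ?_
    simp [prodPMF, Fin.consEquiv, Fin.prod_univ_succ]

lemma IsPMF.prodPMF {α : Type*} {p : α → ℝ≥0∞} (hp : IsPMF p) (n : ℕ) : IsPMF (prodPMF p n) := by
  rw [IsPMF, tsum_prodPMF, hp, one_pow]

theorem exists_kraft_tsum_mul_le {α : Type*} [Countable α] {π : Set (Set α)} (h : IsPartition π)
    {φ : α → α} (hφ : ∀ A ∈ π, ∃ y ∈ A, ∀ x ∈ A, φ x = y) {v : α → ℝ≥0∞} (hv : IsPMF v)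
    {s : ℝ} (hs : 0 < s) :
    ∃ ℓ : α → ℕ, Kraft (Set.range φ) ℓ ∧ ∀ μ, IsPMF μ →
      ∑' x, μ x * ℓ (φ x) ≤ Dpart π μ v + Hpart π μ + 1 + ENNReal.ofReal s := by
  obtain ⟨q, hq1, hq0, hvq⟩ := exists_pos_ge_mul_tsum_le_one hv.le hs
  set Q : π → ℝ≥0∞ := fun A => measOf q A
  have hQ : ∑' A, Q A ≤ 1 := (h.tsum_measOf q).trans_le hq1
  have hQ0 : ∀ A, Q A ≠ 0 := h.measOf_ne_zero hq0
  refine ⟨fun x => shannonLength (Q (h.cell x)), ?_, fun μ hμ => ?_⟩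
  · calc ∑' y : Set.range φ, (2⁻¹ : ℝ≥0∞) ^ shannonLength (Q (h.cell y))
        ≤ ∑' A, (2⁻¹ : ℝ≥0∞) ^ shannonLength (Q A) := h.tsum_range_le_tsum_cells hφ _
      _ ≤ ∑' A, Q A := ENNReal.tsum_le_tsum fun A =>
          inv_two_pow_shannonLength_le (hQ0 A) (ne_top_of_le_ne_top ENNReal.one_ne_top
            ((ENNReal.le_tsum A).trans hQ))
      _ ≤ 1 := hQ
  calc ∑' x, μ x * shannonLength (Q (h.cell (φ x)))
      = ∑' A : π, measOf μ A * shannonLength (Q A) := by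
        rw [h.tsum_eq_tsum_cells]
        refine tsum_congr fun A => ?_
        rw [measOf, ← ENNReal.tsum_mul_right]
        refine tsum_congr fun x => ?_
        rw [h.cell_apply_eq_cell hφ, h.cell_eq_of_mem x.2]
    _ ≤ _ := by
        refine tsum_mul_shannonLength_le ((h.tsum_measOf μ).trans hμ) ((h.tsum_measOf v).trans hv)
          hQ0 (fun A => (ENNReal.le_tsum A).trans hQ) fun A => ?_
        rw [measOf, ← ENNReal.tsum_mul_left]
        exact ENNReal.tsum_le_tsum fun x => hvq x

lemma exists_isPMF_iSup_Dpart_le {β : Type*} [Nonempty β] (Λn : Set (β → ℝ≥0∞))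
    (π : Set (Set β)) {η : ℝ≥0∞} (hη : η ≠ 0) :
    ∃ v, IsPMF v ∧ ⨆ μn ∈ Λn, Dpart π μn v ≤ Rplus Λn π + η := by
  rcases eq_or_ne (Rplus Λn π) ⊤ with hR | hR
  · classical
    obtain ⟨b⟩ := ‹Nonempty β›
    exact ⟨fun x => if x = b then 1 else 0, tsum_ite_eq b 1, by simp [hR]⟩
  obtain ⟨v, hv⟩ := iInf_lt_iff.1 (ENNReal.lt_add_right hR hη)
  exact ⟨v.1, v.2, hv.le⟩

lemma ENNReal.add_add_natCast_mul_div_le {a e b : ℝ≥0∞} {n : ℕ} (hn : 1 ≤ n) :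
    (a + e + n * b) / n ≤ a / n + e + b := by
  have hn0 : (n : ℝ≥0∞) ≠ 0 := by exact_mod_cast (by omega : n ≠ 0)
  rw [ENNReal.add_div, ENNReal.add_div, mul_comm, ENNReal.mul_div_cancel_right hn0 (by simp)]
  gcongr
  exact ENNReal.div_le_of_le_mul (le_mul_of_one_le_right' (by exact_mod_cast hn))

theorem achievable_fixed_quantizer_general (ρ : ℕ → ℕ → ℝ)
    (d : ℝ) (n : ℕ) (hn : 1 ≤ n)
    (Λ : Set (ℕ → ℝ≥0∞)) (hΛ : ∀ μ ∈ Λ, IsPMF μ)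
    (π : Set (Set (Fin n → ℕ))) (hπ : QPart ρ n d π)
    (φ : (Fin n → ℕ) → Fin n → ℕ)
    (hφ : ∀ A ∈ π, ∃ y ∈ A, (∀ x ∈ A, blockDist ρ n x y ≤ d) ∧ ∀ x ∈ A, φ x = y)
    (ε : ℝ≥0∞) (hε : 0 < ε) :
    ∃ ℓ : (Fin n → ℕ) → ℕ, Kraft (Set.range φ) ℓ ∧
      (⨆ μ ∈ Λ, (codeRate φ ℓ (prodPMF μ n) - opRate ρ n d (prodPMF μ n)))
        ≤ (Rplus (prodFam Λ n) π
            + (⨆ μ ∈ Λ, (Hpart π (prodPMF μ n) - (n : ℝ≥0∞) * opRate ρ n d (prodPMF μ n)))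
            + 1) / (n : ℝ≥0∞) + ε := by
  obtain ⟨r, hr0, hrε⟩ : ∃ r : ℝ, 0 < r ∧ ENNReal.ofReal r + ENNReal.ofReal r ≤ ε := by
    obtain ⟨r, -, hr0, hr⟩ := ENNReal.lt_iff_exists_real_btwn.1 (ENNReal.half_pos hε.ne')
    exact ⟨r, ENNReal.ofReal_pos.1 hr0, (add_le_add hr.le hr.le).trans (ENNReal.add_halves ε).le⟩
  obtain ⟨v, hv, hvD⟩ :=
    exists_isPMF_iSup_Dpart_le (prodFam Λ n) π (ENNReal.ofReal_pos.2 hr0).ne'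
  obtain ⟨ℓ, hℓ, hlen⟩ := exists_kraft_tsum_mul_le hπ.1
    (fun A hA => (hφ A hA).imp fun _ ⟨hy, _, hφy⟩ => ⟨hy, hφy⟩) hv hr0
  refine ⟨ℓ, hℓ, iSup₂_le fun μ hμ => tsub_le_iff_right.2 ?_⟩
  set R := opRate ρ n d (prodPMF μ n)
  set S := ⨆ μ ∈ Λ, (Hpart π (prodPMF μ n) - (n : ℝ≥0∞) * opRate ρ n d (prodPMF μ n))
  have hD : Dpart π (prodPMF μ n) v ≤ Rplus (prodFam Λ n) π + ENNReal.ofReal r :=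
    (le_iSup₂ (f := fun μn _ => Dpart π μn v) _ ⟨μ, hμ, rfl⟩).trans hvD
  have hH : Hpart π (prodPMF μ n) ≤ S + n * R := tsub_le_iff_right.1 <|
    le_iSup₂ (f := fun μ _ => Hpart π (prodPMF μ n) - n * opRate ρ n d (prodPMF μ n)) μ hμ
  calc codeRate φ ℓ (prodPMF μ n)
      ≤ (Rplus (prodFam Λ n) π + S + 1 + ε + n * R) / n := by
        refine ENNReal.div_le_div_right ?_ _
        calc _ ≤ _ := hlen _ ((hΛ μ hμ).prodPMF n)
          _ ≤ (Rplus (prodFam Λ n) π + ENNReal.ofReal r) + (S + n * R) + 1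
              + ENNReal.ofReal r := by gcongr
          _ = Rplus (prodFam Λ n) π + S + 1 + (ENNReal.ofReal r + ENNReal.ofReal r) + n * R := by
              ring
          _ ≤ _ := by gcongr
    _ ≤ _ := ENNReal.add_add_natCast_mul_div_le hn

/-- Achievable worst-case redundancy for a fixed quantizer: given `π ∈ Q_n(d)`
and a quantizer `φ` sending every cell `A ∈ π` to a prototype `y_A ∈ A` within distortion `d`,
for every `ε > 0` there is a Kraft length function `ℓ` on the range of `φ` with
`sup_{μ ∈ Λ}[R((φ,ℓ), μ^n) − R_n(d, μ^n)]
  ≤ (1/n)·(R⁺(Λ^n, σ(π)) + sup_{μ ∈ Λ}[H_{σ(π)}(μ^n) − n·R_n(d, μ^n)] + 1) + ε`. -/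
theorem achievable_fixed_quantizer (ρ : ℕ → ℕ → ℝ) (hρ : IsDistortion ρ)
    (d : ℝ) (hd : 0 < d) (n : ℕ) (hn : 1 ≤ n)
    (Λ : Set (ℕ → ℝ≥0∞)) (hΛ : ∀ μ ∈ Λ, IsPMF μ)
    (π : Set (Set (Fin n → ℕ))) (hπ : QPart ρ n d π)
    (φ : (Fin n → ℕ) → Fin n → ℕ)
    (hφ : ∀ A ∈ π, ∃ y ∈ A, (∀ x ∈ A, blockDist ρ n x y ≤ d) ∧ ∀ x ∈ A, φ x = y)
    (ε : ℝ≥0∞) (hε : 0 < ε) :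
    ∃ ℓ : (Fin n → ℕ) → ℕ, Kraft (Set.range φ) ℓ ∧
      (⨆ μ ∈ Λ, (codeRate φ ℓ (prodPMF μ n) - opRate ρ n d (prodPMF μ n)))
        ≤ (Rplus (prodFam Λ n) π
            + (⨆ μ ∈ Λ, (Hpart π (prodPMF μ n) - (n : ℝ≥0∞) * opRate ρ n d (prodPMF μ n)))
            + 1) / (n : ℝ≥0∞) + ε :=
  achievable_fixed_quantizer_general ρ d n hn Λ hΛ π hπ φ hφ ε hε
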